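/- Let d ≥ 1, p, q ∈ (0,∞] and r₂ ∈ (0,q]. For a measurable function F: ℝ^d × ℝ^d → ℂ define ψ(x) = ‖F(x,·)‖_{L^q(ℝ^d)}, and for s ∈ (0,∞] define H_s(j,ι) = ‖x ↦ ‖F(x,·)‖_{L^q(ι+[0,2π]^d)}‖_{L^s(j+[0,1]^d)} for j ∈ ℤ^d, ι ∈ 2πℤ^d. Then there exist constants C₁, C₂ > 0, independent of F, such that ‖(‖(H_{r₂}(j,ι))_{ι∈2πℤ^d}‖_{ℓ^q})_{j∈ℤ^d}‖_{ℓ^p} ≤ C₁·‖(‖ψ‖_{L^{r₂}(j+[0,1]^d)})_{j∈ℤ^d}‖_{ℓ^p} and ‖(‖ψ‖_{L^{r₂}(j+[0,1]^d)})_{j∈ℤ^d}‖_{ℓ^p} ≤ C₂·‖(‖(H_∞(j,ι))_{ι∈2πℤ^d}‖_{ℓ^q})_{j∈ℤ^d}‖_{ℓ^p}; all quantities may be +∞. -/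

import Mathlib

/-!
Both inequalities hold with constant `1`, cell by cell in `j`. The cubes `2πι + [0,2π]^d` tile
`ℝ^d` up to null sets, so `ψ(x)` is exactly the `ℓ^q` norm over `ι` of the local norms
`‖F(x,·)‖_{L^q(2πι+[0,2π]^d)}`. For the second inequality each local norm is bounded by its
essential supremum over the unit cell, which has measure `1`. The first is Minkowski's integral
inequality with exponent `q/r₂ ≥ 1`: the `ℓ^q` norm in `ι` moves inside the `L^{r₂}` norm in `x`.
-/

open MeasureTheory Complex Real
open scoped InnerProductSpace ENNReal

noncomputable section

/-- `ℝ^d` as a Euclidean space. -/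
abbrev Ed (d : ℕ) := EuclideanSpace ℝ (Fin d)

/-- The unit cell `j + [0,1]^d ⊆ ℝ^d`. -/
def cell (d : ℕ) (j : Fin d → ℤ) : Set (Ed d) :=
  {x | ∀ i, x i ∈ Set.Icc (j i : ℝ) (j i + 1)}

/-- The cell `2πι + [0,2π]^d ⊆ ℝ^d`, `ι ∈ ℤ^d`. -/
def cell2pi (d : ℕ) (ι : Fin d → ℤ) : Set (Ed d) :=
  {x | ∀ i, x i ∈ Set.Icc (2*π*(ι i)) (2*π*(ι i) + 2*π)}

/-- The `ℓ^p` quasi-norm of an `ℝ≥0∞`-valued sequence, `p ∈ (0,∞]`. -/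
def lpSeq {ι : Type*} (p : ℝ≥0∞) (a : ι → ℝ≥0∞) : ℝ≥0∞ :=
  if p = ∞ then ⨆ j, a j else (∑' j, a j ^ p.toReal) ^ (1 / p.toReal)

/-- The `L^p` quasi-norm of an `ℝ≥0∞`-valued function, `p ∈ (0,∞]`. -/
def lpENN {α : Type*} [MeasurableSpace α] (p : ℝ≥0∞) (μ : Measure α) (g : α → ℝ≥0∞) : ℝ≥0∞ :=
  if p = ∞ then essSup g μ else (∫⁻ x, g x ^ p.toReal ∂μ) ^ (1 / p.toReal)

/-- The quantity `H_s(j,ι) = ‖x ↦ ‖F(x,·)‖_{L^q(ι+[0,2π]^d)}‖_{L^s(j+[0,1]^d)}`. -/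
def Hq (d : ℕ) (q s : ℝ≥0∞) (F : Ed d × Ed d → ℂ) (j ι : Fin d → ℤ) : ℝ≥0∞ :=
  lpENN s (volume.restrict (cell d j))
    (fun x => eLpNorm (fun t => F (x, t)) q (volume.restrict (cell2pi d ι)))

section Minkowski

variable {ι α : Type*} [MeasurableSpace α] {μ : Measure α} {b : ι → α → ℝ≥0∞} {s : ℝ}

lemma ENNReal.rpow_eq_rpow_sub_one_mul (hs : 1 ≤ s) (x : ℝ≥0∞) : x ^ s = x ^ (s - 1) * x := by
  conv_lhs => rw [← sub_add_cancel s 1]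
  rw [ENNReal.rpow_add_of_nonneg _ _ (sub_nonneg.2 hs) zero_le_one, ENNReal.rpow_one]

lemma ENNReal.le_of_rpow_le_rpow_sub_one_mul {N R : ℝ≥0∞} (hs : 1 ≤ s) (hN : N ≠ ∞)
    (h : N ^ s ≤ N ^ (s - 1) * R) : N ≤ R := by
  rcases eq_or_ne N 0 with rfl | hN0
  · exact bot_le
  rw [ENNReal.rpow_eq_rpow_sub_one_mul hs] at h
  exact (ENNReal.mul_le_mul_iff_right (ENNReal.rpow_pos (pos_iff_ne_zero.2 hN0) hN).ne'
    (ENNReal.rpow_ne_top_of_nonneg (sub_nonneg.2 hs) hN)).mp h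

theorem ENNReal.Lp_finsetSum_lintegral_le (T : Finset ι) (hb : ∀ i ∈ T, AEMeasurable (b i) μ)
    (hs : 1 ≤ s) :
    (∑ i ∈ T, (∫⁻ x, b i x ∂μ) ^ s) ^ (1 / s) ≤ ∫⁻ x, (∑ i ∈ T, b i x ^ s) ^ (1 / s) ∂μ := by
  rcases hs.eq_or_lt with rfl | hs1
  · simp only [ENNReal.rpow_one, div_one]
    exact (lintegral_finsetSum' T hb).ge
  have hs0 : 0 < s := one_pos.trans hs1
  set R := ∫⁻ x, (∑ i ∈ T, b i x ^ s) ^ (1 / s) ∂μ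
  set S := fun i => ∫⁻ x, b i x ∂μ
  rcases eq_or_ne R ∞ with hR | hR
  · exact hR ▸ le_top
  have hS : ∀ i ∈ T, S i ≠ ∞ := fun i hi => ne_top_of_le_ne_top hR <| lintegral_mono fun x =>
    calc b i x = (b i x ^ s) ^ (1 / s) := by rw [one_div, ENNReal.rpow_rpow_inv hs0.ne']
      _ ≤ (∑ i ∈ T, b i x ^ s) ^ (1 / s) := by
        gcongr
        exact Finset.single_le_sum (f := fun i => b i x ^ s) (fun _ _ => zero_le) hi
  set N := (∑ i ∈ T, S i ^ s) ^ (1 / s)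
  have hN : N ≠ ∞ := ENNReal.rpow_ne_top_of_nonneg (by positivity) <|
    ENNReal.sum_ne_top.2 fun i hi => ENNReal.rpow_ne_top_of_nonneg hs0.le (hS i hi)
  have hNs : N ^ s = ∑ i ∈ T, S i ^ s := by
    simp only [N, ← ENNReal.rpow_mul, one_div_mul_cancel hs0.ne', ENNReal.rpow_one]
  have hss' := Real.HolderConjugate.conjExponent hs1
  set s' := s.conjExponent
  have hNdual : (∑ i ∈ T, (S i ^ (s - 1)) ^ s') ^ (1 / s') = N ^ (s - 1) := by
    have hexp : s * (1 / s') = s - 1 := by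
      rw [mul_one_div, div_eq_iff hss'.symm.ne_zero]
      exact hss'.sub_one_mul_conj.symm
    simp_rw [← ENNReal.rpow_mul, hss'.sub_one_mul_conj]
    rw [← hexp, ENNReal.rpow_mul, hNs]
  -- Hölder against `(S i ^ (s - 1))_i`, whose `ℓ^{s'}` norm is `N ^ (s - 1)`, gives
  -- `N ^ s ≤ N ^ (s - 1) * R`; since `N < ∞` the factor `N ^ (s - 1)` cancels.
  refine ENNReal.le_of_rpow_le_rpow_sub_one_mul hs hN ?_
  calc N ^ s = ∑ i ∈ T, S i ^ (s - 1) * S i := by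
        rw [hNs]
        exact Finset.sum_congr rfl fun i _ => ENNReal.rpow_eq_rpow_sub_one_mul hs _
    _ = ∫⁻ x, ∑ i ∈ T, S i ^ (s - 1) * b i x ∂μ := by
        rw [lintegral_finsetSum' T fun i hi => (hb i hi).const_mul _]
        refine Finset.sum_congr rfl fun i hi => ?_
        rw [lintegral_const_mul' _ _ (ENNReal.rpow_ne_top_of_nonneg (by linarith) (hS i hi))]
    _ ≤ ∫⁻ x, N ^ (s - 1) * (∑ i ∈ T, b i x ^ s) ^ (1 / s) ∂μ := lintegral_mono fun x =>
        hNdual ▸ ENNReal.inner_le_Lp_mul_Lq T _ _ hss'.symm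
    _ = N ^ (s - 1) * R := lintegral_const_mul' _ _ (ENNReal.rpow_ne_top_of_nonneg (by linarith) hN)

theorem ENNReal.Lp_tsum_lintegral_le (hb : ∀ i, AEMeasurable (b i) μ) (hs : 1 ≤ s) :
    (∑' i, (∫⁻ x, b i x ∂μ) ^ s) ^ (1 / s) ≤ ∫⁻ x, (∑' i, b i x ^ s) ^ (1 / s) ∂μ := by
  have hs0 : 0 < s := one_pos.trans_le hs
  rw [one_div, ENNReal.rpow_inv_le_iff hs0, ENNReal.tsum_eq_iSup_sum]
  refine iSup_le fun T => ?_
  rw [← ENNReal.rpow_inv_le_iff hs0, ← one_div]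
  refine (ENNReal.Lp_finsetSum_lintegral_le T (fun i _ => hb i) hs).trans
    (lintegral_mono fun x => ?_)
  gcongr
  exact ENNReal.sum_le_tsum T

end Minkowski

section Quasinorms

variable {ι α : Type*} [MeasurableSpace α] {μ : Measure α}

@[simp] lemma lpSeq_top (a : ι → ℝ≥0∞) : lpSeq ∞ a = ⨆ i, a i := if_pos rfl

lemma lpSeq_of_ne_top {p : ℝ≥0∞} (hp : p ≠ ∞) (a : ι → ℝ≥0∞) :
    lpSeq p a = (∑' i, a i ^ p.toReal) ^ (1 / p.toReal) := if_neg hp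

@[simp] lemma lpENN_top (g : α → ℝ≥0∞) : lpENN ∞ μ g = essSup g μ := if_pos rfl

lemma lpENN_of_ne_top {p : ℝ≥0∞} (hp : p ≠ ∞) (g : α → ℝ≥0∞) :
    lpENN p μ g = (∫⁻ x, g x ^ p.toReal ∂μ) ^ (1 / p.toReal) := if_neg hp

lemma lpSeq_mono {p : ℝ≥0∞} {a b : ι → ℝ≥0∞} (h : a ≤ b) : lpSeq p a ≤ lpSeq p b := by
  unfold lpSeq
  split
  · exact iSup_mono h
  · gcongr with i
    exact h i

lemma lpENN_mono {p : ℝ≥0∞} {g h : α → ℝ≥0∞} (hgh : g ≤ h) : lpENN p μ g ≤ lpENN p μ h := by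
  unfold lpENN
  split
  · exact essSup_mono_ae (Filter.Eventually.of_forall hgh)
  · gcongr with x
    exact hgh x

lemma lpENN_le_of_ae_le {p : ℝ≥0∞} (hp : p ≠ 0) (hμ : μ Set.univ ≤ 1) {g : α → ℝ≥0∞}
    {c : ℝ≥0∞} (hgc : ∀ᵐ x ∂μ, g x ≤ c) : lpENN p μ g ≤ c := by
  rcases eq_or_ne p ∞ with rfl | hpt
  · exact (lpENN_top g).trans_le (essSup_le_of_ae_le c hgc)
  have hp0 : 0 < p.toReal := ENNReal.toReal_pos hp hpt
  calc lpENN p μ g ≤ (∫⁻ _, c ^ p.toReal ∂μ) ^ (1 / p.toReal) := by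
        rw [lpENN_of_ne_top hpt]
        gcongr ?_ ^ _
        exact lintegral_mono_ae (hgc.mono fun x hx => by gcongr)
    _ ≤ (c ^ p.toReal) ^ (1 / p.toReal) := by
        rw [lintegral_const]
        gcongr
        exact mul_le_of_le_one_right' hμ
    _ = c := by rw [← ENNReal.rpow_mul, mul_one_div_cancel hp0.ne', ENNReal.rpow_one]

theorem lpSeq_lpENN_le_lpENN_lpSeq {q r : ℝ≥0∞} (hr : r ≠ 0) (hrq : r ≤ q) (hq : q ≠ ∞)
    {a : ι → α → ℝ≥0∞} (ha : ∀ i, AEMeasurable (a i) μ) :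
    lpSeq q (fun i => lpENN r μ (a i)) ≤ lpENN r μ (fun x => lpSeq q fun i => a i x) := by
  have hrt : r ≠ ∞ := ne_top_of_le_ne_top hq hrq
  have hr0 : 0 < r.toReal := ENNReal.toReal_pos hr hrt
  set s := q.toReal / r.toReal with hs_def
  have hs : 1 ≤ s := (one_le_div hr0).2 (ENNReal.toReal_mono hq hrq)
  simp only [lpSeq_of_ne_top hq, lpENN_of_ne_top hrt]
  calc (∑' i, ((∫⁻ x, a i x ^ r.toReal ∂μ) ^ (1 / r.toReal)) ^ q.toReal) ^ (1 / q.toReal)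
      = ((∑' i, (∫⁻ x, a i x ^ r.toReal ∂μ) ^ s) ^ (1 / s)) ^ (1 / r.toReal) := by
        simp only [← ENNReal.rpow_mul]
        congr 2 <;> simp only [hs_def] <;> field_simp
    _ ≤ (∫⁻ x, (∑' i, (a i x ^ r.toReal) ^ s) ^ (1 / s) ∂μ) ^ (1 / r.toReal) := by
        gcongr
        exact ENNReal.Lp_tsum_lintegral_le (fun i => (ha i).pow_const _) hs
    _ = (∫⁻ x, ((∑' i, a i x ^ q.toReal) ^ (1 / q.toReal)) ^ r.toReal ∂μ) ^ (1 / r.toReal) := by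
        simp only [← ENNReal.rpow_mul]
        congr! 4 <;> simp only [hs_def] <;> field_simp

end Quasinorms

theorem eLpNorm_sum_measure_eq_lpSeq {ι α ε : Type*} [Countable ι] [MeasurableSpace α] [ENorm ε]
    {q : ℝ≥0∞} (hq : q ≠ 0) (f : α → ε) (μ : ι → Measure α) :
    eLpNorm f q (Measure.sum μ) = lpSeq q fun i => eLpNorm f q (μ i) := by
  rcases eq_or_ne q ∞ with rfl | hqt
  · simp only [eLpNorm_exponent_top, eLpNormEssSup, lpSeq_top]
    refine le_antisymm (essSup_le_of_ae_le _ ?_)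
      (iSup_le fun i => essSup_mono_measure' (Measure.le_sum μ i))
    rw [Filter.EventuallyLE, Measure.ae_sum_iff]
    exact fun i => (ENNReal.ae_le_essSup _).mono fun x hx =>
      hx.trans (le_iSup (fun i => essSup _ (μ i)) i)
  · have hq0 : 0 < q.toReal := ENNReal.toReal_pos hq hqt
    simp only [lpSeq_of_ne_top hqt, eLpNorm_eq_lintegral_rpow_enorm_toReal hq hqt,
      lintegral_sum_measure, ← ENNReal.rpow_mul, one_div_mul_cancel hq0.ne', ENNReal.rpow_one]

section Boxes

variable {ι : Type*}

lemma EuclideanSpace.setOf_forall_mem_eq_preimage (S : ι → Set ℝ) :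
    {x : EuclideanSpace ℝ ι | ∀ i, x i ∈ S i}
      = (MeasurableEquiv.toLp 2 (ι → ℝ)).symm ⁻¹' Set.univ.pi S := by
  ext x
  simp [Set.mem_pi]

lemma EuclideanSpace.measurableSet_setOf_forall_mem [Countable ι] {S : ι → Set ℝ}
    (hS : ∀ i, MeasurableSet (S i)) : MeasurableSet {x : EuclideanSpace ℝ ι | ∀ i, x i ∈ S i} := by
  rw [setOf_forall_mem_eq_preimage]
  exact (MeasurableEquiv.toLp 2 (ι → ℝ)).symm.measurable (MeasurableSet.univ_pi hS)

lemma EuclideanSpace.volume_setOf_forall_mem [Fintype ι] {S : ι → Set ℝ}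
    (hS : ∀ i, MeasurableSet (S i)) :
    volume {x : EuclideanSpace ℝ ι | ∀ i, x i ∈ S i} = ∏ i, volume (S i) := by
  rw [setOf_forall_mem_eq_preimage, (volume_preserving_symm_measurableEquiv_toLp ι).measure_preimage
    (MeasurableSet.univ_pi hS).nullMeasurableSet, volume_pi_pi]

end Boxes

section Cells

variable {d : ℕ}

lemma measurableSet_cell2pi (ι : Fin d → ℤ) : MeasurableSet (cell2pi d ι) :=
  EuclideanSpace.measurableSet_setOf_forall_mem fun _ => measurableSet_Icc

lemma volume_cell (j : Fin d → ℤ) : volume (cell d j) = 1 := by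
  rw [cell, EuclideanSpace.volume_setOf_forall_mem fun _ => measurableSet_Icc]
  simp [Real.volume_Icc]

lemma volume_Icc_inter_Icc_two_pi {m n : ℤ} (hmn : m < n) :
    volume (Set.Icc (2 * π * m) (2 * π * m + 2 * π) ∩ Set.Icc (2 * π * n) (2 * π * n + 2 * π))
      = 0 := by
  have h : 2 * π * m + 2 * π ≤ 2 * π * n := by
    have : (m : ℝ) + 1 ≤ n := by exact_mod_cast hmn
    nlinarith [pi_pos]
  rw [Set.Icc_inter_Icc, Real.volume_Icc, ENNReal.ofReal_eq_zero, sub_nonpos]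
  exact (min_le_left _ _).trans (h.trans (le_max_right _ _))

lemma pairwise_aedisjoint_cell2pi : Pairwise (Function.onFun (AEDisjoint volume) (cell2pi d)) := by
  intro ι κ hne
  obtain ⟨i, hi⟩ := Function.ne_iff.mp hne
  have hinter : cell2pi d ι ∩ cell2pi d κ = {x | ∀ k, x k ∈
      Set.Icc (2 * π * ι k) (2 * π * ι k + 2 * π) ∩
        Set.Icc (2 * π * κ k) (2 * π * κ k + 2 * π)} := by
    ext x
    simp [cell2pi, forall_and]
  rw [Function.onFun, AEDisjoint, hinter,
    EuclideanSpace.volume_setOf_forall_mem fun _ => measurableSet_Icc.inter measurableSet_Icc]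
  refine Finset.prod_eq_zero (Finset.mem_univ i) ?_
  rcases hi.lt_or_gt with h | h
  · exact volume_Icc_inter_Icc_two_pi h
  · rw [Set.inter_comm]
    exact volume_Icc_inter_Icc_two_pi h

lemma iUnion_cell2pi : ⋃ ι, cell2pi d ι = Set.univ := by
  refine Set.iUnion_eq_univ_iff.2 fun x => ⟨fun i => ⌊x i / (2 * π)⌋, fun i => ?_⟩
  have h2π : 0 < 2 * π := by positivity
  have hlo := Int.floor_le (x i / (2 * π))
  have hhi := Int.lt_floor_add_one (x i / (2 * π))
  rw [le_div_iff₀ h2π] at hlo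
  rw [div_lt_iff₀ h2π] at hhi
  constructor <;> nlinarith

lemma volume_eq_sum_restrict_cell2pi :
    (volume : Measure (Ed d)) = Measure.sum fun ι => volume.restrict (cell2pi d ι) := by
  rw [← Measure.restrict_iUnion_ae pairwise_aedisjoint_cell2pi
    fun ι => (measurableSet_cell2pi ι).nullMeasurableSet, iUnion_cell2pi, Measure.restrict_univ]

lemma eLpNorm_eq_lpSeq_cell2pi {ε : Type*} [ENorm ε] {q : ℝ≥0∞} (hq : q ≠ 0) (f : Ed d → ε) :
    eLpNorm f q volume = lpSeq q fun ι => eLpNorm f q (volume.restrict (cell2pi d ι)) := by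
  conv_lhs => rw [volume_eq_sum_restrict_cell2pi]
  exact eLpNorm_sum_measure_eq_lpSeq hq f _

end Cells

theorem Measurable.eLpNorm_prod_right {α β E : Type*} [MeasurableSpace α] [MeasurableSpace β]
    [NormedAddCommGroup E] [MeasurableSpace E] [OpensMeasurableSpace E] {f : α × β → E}
    (hf : Measurable f) {q : ℝ≥0∞} (hq : q ≠ 0) (hqt : q ≠ ∞) (ν : Measure β) [SFinite ν] :
    Measurable fun x => eLpNorm (fun y => f (x, y)) q ν := by
  simp_rw [eLpNorm_eq_lintegral_rpow_enorm_toReal hq hqt]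
  exact ((hf.enorm.pow_const _).lintegral_prod_right').pow_const _

section Amalgam

variable {d : ℕ} {q r : ℝ≥0∞}

lemma lpSeq_Hq_le_lpENN_eLpNorm (hq : q ≠ 0) (hr : r ≠ 0) (hrq : r ≤ q)
    {F : Ed d × Ed d → ℂ} (hF : Measurable F) (j : Fin d → ℤ) :
    lpSeq q (fun ι => Hq d q r F j ι)
      ≤ lpENN r (volume.restrict (cell d j)) (fun x => eLpNorm (fun t => F (x, t)) q volume) := by
  simp only [Hq, eLpNorm_eq_lpSeq_cell2pi hq]
  rcases eq_or_ne q ∞ with rfl | hqt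
  · simp only [lpSeq_top]
    exact iSup_le fun ι => lpENN_mono fun x =>
      le_iSup (fun κ => eLpNorm (fun t => F (x, t)) ∞ (volume.restrict (cell2pi d κ))) ι
  · exact lpSeq_lpENN_le_lpENN_lpSeq hr hrq hqt fun ι =>
      (hF.eLpNorm_prod_right hq hqt _).aemeasurable

lemma lpENN_eLpNorm_le_lpSeq_Hq_top (hq : q ≠ 0) (hr : r ≠ 0) (F : Ed d × Ed d → ℂ)
    (j : Fin d → ℤ) :
    lpENN r (volume.restrict (cell d j)) (fun x => eLpNorm (fun t => F (x, t)) q volume)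
      ≤ lpSeq q (fun ι => Hq d q ∞ F j ι) := by
  refine lpENN_le_of_ae_le hr (by simp [volume_cell]) ?_
  filter_upwards [ae_all_iff.2 fun ι : Fin d → ℤ => ENNReal.ae_le_essSup _] with x hx
  rw [eLpNorm_eq_lpSeq_cell2pi hq]
  exact lpSeq_mono fun ι => by simpa only [Hq, lpENN_top] using hx ι

end Amalgam

theorem stmt12_general (d : ℕ) (p q r₂ : ℝ≥0∞)
    (hq : 0 < q) (hr₂ : 0 < r₂) (hr₂q : r₂ ≤ q) :
    ∃ C₁ C₂ : ℝ, 0 < C₁ ∧ 0 < C₂ ∧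
      ∀ F : Ed d × Ed d → ℂ, Measurable F →
        lpSeq p (fun j : Fin d → ℤ => lpSeq q (fun ι : Fin d → ℤ => Hq d q r₂ F j ι))
          ≤ ENNReal.ofReal C₁ *
            lpSeq p (fun j : Fin d → ℤ =>
              lpENN r₂ (volume.restrict (cell d j))
                (fun x => eLpNorm (fun t => F (x, t)) q volume)) ∧
        lpSeq p (fun j : Fin d → ℤ =>
            lpENN r₂ (volume.restrict (cell d j))
              (fun x => eLpNorm (fun t => F (x, t)) q volume))
          ≤ ENNReal.ofReal C₂ *
            lpSeq p (fun j : Fin d → ℤ => lpSeq q (fun ι : Fin d → ℤ => Hq d q ∞ F j ι)) := by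
  refine ⟨1, 1, one_pos, one_pos, fun F hF => ?_⟩
  simp only [ENNReal.ofReal_one, one_mul]
  exact ⟨lpSeq_mono fun j => lpSeq_Hq_le_lpENN_eLpNorm hq.ne' hr₂.ne' hr₂q hF j,
    lpSeq_mono fun j => lpENN_eLpNorm_le_lpSeq_Hq_top hq.ne' hr₂.ne' F j⟩

/-- comparison of Wiener amalgam quasi-norms `𝖶^∞(ℓ^{q,p})`,
`𝖶^{r₂}_2(ℓ^p, L^q)` and `𝖶^{r₂}(ℓ^{q,p})` on the lattice `ℤ^d × 2πℤ^d`. -/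
theorem stmt12 (d : ℕ) (hd : 1 ≤ d) (p q r₂ : ℝ≥0∞)
    (hp : 0 < p) (hq : 0 < q) (hr₂ : 0 < r₂) (hr₂q : r₂ ≤ q) :
    ∃ C₁ C₂ : ℝ, 0 < C₁ ∧ 0 < C₂ ∧
      ∀ F : Ed d × Ed d → ℂ, Measurable F →
        lpSeq p (fun j : Fin d → ℤ => lpSeq q (fun ι : Fin d → ℤ => Hq d q r₂ F j ι))
          ≤ ENNReal.ofReal C₁ *
            lpSeq p (fun j : Fin d → ℤ =>
              lpENN r₂ (volume.restrict (cell d j))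
                (fun x => eLpNorm (fun t => F (x, t)) q volume)) ∧
        lpSeq p (fun j : Fin d → ℤ =>
            lpENN r₂ (volume.restrict (cell d j))
              (fun x => eLpNorm (fun t => F (x, t)) q volume))
          ≤ ENNReal.ofReal C₂ *
            lpSeq p (fun j : Fin d → ℤ => lpSeq q (fun ι : Fin d → ℤ => Hq d q ∞ F j ι)) :=
  stmt12_general d p q r₂ hq hr₂ hr₂q

end
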